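/- Let u and v be m×m complex matrices with v invertible. Then the Frobenius-type norm satisfies ‖v⁻¹ ⋆ u ⋆ v‖ ≤ (m+1)! · (‖v‖^m / det(v)) · ‖u‖, where ⋆ is matrix multiplication and ‖w‖² = Σ_{i,j} |w_{i,j}|² is the squared Frobenius norm (assuming det(v) > 0 real, or interpreting the bound with |det(v)|). -/

import Mathlib

/-- Frobenius norm of a complex matrix. -/
noncomputable def frobNorm {m : ℕ} (w : Matrix (Fin m) (Fin m) ℂ) : ℝ :=
  Real.sqrt (∑ i, ∑ j, ‖w i j‖ ^ 2)

/-!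
The Frobenius norm is submultiplicative, so `‖v⁻¹ u v‖ ≤ ‖v⁻¹‖ ‖u‖ ‖v‖`, and it remains to bound
`‖v⁻¹‖ ‖v‖ = ‖adj v‖ ‖v‖ / |det v|`. Every entry of `v` is at most `‖v‖`, so by the permutation
expansion every cofactor is at most `(m-1)! ‖v‖^(m-1)`, whence `‖adj v‖ ≤ m! ‖v‖^(m-1)` and
`‖v⁻¹ u v‖ ≤ m! ‖v‖^m ‖u‖ / |det v|`.
-/

namespace Matrix

attribute [local instance] frobeniusSeminormedAddCommGroup frobeniusNormSMulClass

section SeminormedAddCommGroup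

variable {α : Type*} [SeminormedAddCommGroup α] {m n : Type*} [Fintype m] [Fintype n]

theorem frobenius_norm_eq_sqrt (A : Matrix m n α) : ‖A‖ = √(∑ i, ∑ j, ‖A i j‖ ^ 2) := by
  change ‖WithLp.toLp 2 fun i => WithLp.toLp 2 (A i)‖ = _
  rw [PiLp.norm_eq_of_L2]
  simp only [PiLp.norm_sq_eq_of_L2]

theorem norm_entry_le_frobenius_norm (A : Matrix m n α) (i : m) (j : n) : ‖A i j‖ ≤ ‖A‖ :=
  calc ‖A i j‖ ≤ ‖WithLp.toLp 2 (A i)‖ := PiLp.norm_apply_le (WithLp.toLp 2 (A i)) j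
    _ ≤ ‖WithLp.toLp 2 fun i => WithLp.toLp 2 (A i)‖ :=
      PiLp.norm_apply_le (WithLp.toLp 2 fun i => WithLp.toLp 2 (A i)) i

theorem frobenius_norm_le_card_mul_of_forall_norm_entry_le (A : Matrix n n α) {c : ℝ}
    (hc : 0 ≤ c) (h : ∀ i j, ‖A i j‖ ≤ c) : ‖A‖ ≤ Fintype.card n * c := by
  have hsum : ∑ i, ∑ j, ‖A i j‖ ^ 2 ≤ ∑ _i : n, ∑ _j : n, c ^ 2 :=
    Finset.sum_le_sum fun i _ => Finset.sum_le_sum fun j _ =>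
      pow_le_pow_left₀ (norm_nonneg _) (h i j) 2
  calc ‖A‖ ≤ √(∑ _i : n, ∑ _j : n, c ^ 2) := by
        rw [frobenius_norm_eq_sqrt]; exact Real.sqrt_le_sqrt hsum
    _ = Fintype.card n * c := by
        rw [← Real.sqrt_sq (by positivity : (0 : ℝ) ≤ Fintype.card n * c)]
        simp only [Finset.sum_const, Finset.card_univ, nsmul_eq_mul]
        ring_nf

end SeminormedAddCommGroup

section NormedField

variable {𝕜 : Type*} [NormedField 𝕜]

theorem norm_det_le_of_forall_norm_entry_le {n : Type*} [Fintype n] [DecidableEq n]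
    (A : Matrix n n 𝕜) {c : ℝ} (h : ∀ i j, ‖A i j‖ ≤ c) :
    ‖A.det‖ ≤ (Fintype.card n).factorial * c ^ Fintype.card n := by
  have hdet := det_le (abv := NormedField.toAbsoluteValue 𝕜) h
  rw [nsmul_eq_mul] at hdet
  exact hdet

theorem norm_adjugate_entry_le {n : ℕ} (A : Matrix (Fin (n + 1)) (Fin (n + 1)) 𝕜) (i j) :
    ‖A.adjugate i j‖ ≤ n.factorial * ‖A‖ ^ n := by
  rw [adjugate_fin_succ_eq_det_submatrix, norm_mul, norm_pow, norm_neg, norm_one, one_pow,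
    one_mul]
  simpa only [Fintype.card_fin] using
    norm_det_le_of_forall_norm_entry_le (A.submatrix j.succAbove i.succAbove) fun _ _ =>
      norm_entry_le_frobenius_norm A _ _

theorem frobenius_norm_adjugate_mul_le {n : ℕ} (A : Matrix (Fin n) (Fin n) 𝕜) :
    ‖A.adjugate‖ * ‖A‖ ≤ n.factorial * ‖A‖ ^ n := by
  cases n with
  | zero => simp [Subsingleton.elim A 0]
  | succ n =>
    have hadj : ‖A.adjugate‖ ≤ (n + 1) * (n.factorial * ‖A‖ ^ n) := by
      simpa only [Fintype.card_fin, Nat.cast_add, Nat.cast_one] using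
        frobenius_norm_le_card_mul_of_forall_norm_entry_le _ (by positivity)
          (norm_adjugate_entry_le A)
    calc ‖A.adjugate‖ * ‖A‖ ≤ (n + 1) * (n.factorial * ‖A‖ ^ n) * ‖A‖ := by gcongr
      _ = (n + 1).factorial * ‖A‖ ^ (n + 1) := by push_cast [Nat.factorial_succ]; ring

theorem frobenius_norm_inv_mul_le {n : ℕ} (A : Matrix (Fin n) (Fin n) 𝕜) :
    ‖A⁻¹‖ * ‖A‖ ≤ n.factorial * ‖A‖ ^ n / ‖A.det‖ := by
  rw [inv_def, Ring.inverse_eq_inv', norm_smul, norm_inv, mul_assoc, inv_mul_eq_div]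
  exact div_le_div_of_nonneg_right (frobenius_norm_adjugate_mul_le A) (norm_nonneg _)

end NormedField

end Matrix

open Matrix

attribute [local instance] frobeniusNormedAddCommGroup

theorem frobNorm_eq_norm {m : ℕ} (w : Matrix (Fin m) (Fin m) ℂ) : frobNorm w = ‖w‖ :=
  (frobenius_norm_eq_sqrt w).symm

theorem stmt5_general {m : ℕ} (u v : Matrix (Fin m) (Fin m) ℂ) :
    frobNorm (v⁻¹ * u * v) ≤
      (m + 1).factorial * (frobNorm v ^ m / ‖v.det‖) * frobNorm u := by
  simp only [frobNorm_eq_norm]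
  have hfact : (m.factorial : ℝ) ≤ (m + 1).factorial := by
    exact_mod_cast Nat.factorial_le m.le_succ
  calc ‖v⁻¹ * u * v‖ ≤ ‖v⁻¹‖ * ‖u‖ * ‖v‖ := by
        grw [frobenius_norm_mul, frobenius_norm_mul]
    _ = ‖v⁻¹‖ * ‖v‖ * ‖u‖ := by ring
    _ ≤ m.factorial * ‖v‖ ^ m / ‖v.det‖ * ‖u‖ := by grw [frobenius_norm_inv_mul_le]
    _ ≤ (m + 1).factorial * (‖v‖ ^ m / ‖v.det‖) * ‖u‖ := by
        rw [mul_div_assoc]; gcongr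

/-- `‖v⁻¹ u v‖ ≤ (m+1)! ⬝ (‖v‖^m / |det v|) ⬝ ‖u‖` for the Frobenius norm. -/
theorem stmt5 {m : ℕ} (u v : Matrix (Fin m) (Fin m) ℂ) (hv : IsUnit v.det) :
    frobNorm (v⁻¹ * u * v) ≤
      (m + 1).factorial * (frobNorm v ^ m / ‖v.det‖) * frobNorm u :=
  stmt5_general u v
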